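/- arXiv:2509.14184 — 4 statements merged into one kernel-verified Lean document; each statement's English description precedes it below -/
import Mathlib

section
/- The graph G* is a cubic (3-regular) loopless graph that admits a perfect matching. -/
/-- A loopless multigraph: each edge has an unordered pair of distinct endpoints.
Parallel edges are allowed. -/
structure Multigraph (V : Type) (E : Type) where
  ends : E → Sym2 V
  loopless : ∀ e, ¬ (ends e).IsDiag

namespace Multigraph

variable {V E V' E' V'' E'' : Type}

/-- `G.inc v` is the set `∂_G(v)` of edges of `G` incident with the vertex `v`. -/
def inc (G : Multigraph V E) (v : V) : Set E := {e | v ∈ G.ends e}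

/-- Two edges are adjacent if they are distinct and share an endpoint. -/
def EdgeAdj (G : Multigraph V E) (e₁ e₂ : E) : Prop :=
  e₁ ≠ e₂ ∧ ∃ v, e₁ ∈ G.inc v ∧ e₂ ∈ G.inc v

/-- `f` is an `H`-coloring of `G`: a proper edge-coloring (adjacent edges of `G` receive
distinct images) such that for every vertex `v` of `G` there is a vertex `u` of `H` with
`f(∂_G(v)) = ∂_H(u)`. -/
def IsColoring (G : Multigraph V E) (H : Multigraph V' E') (f : E → E') : Prop :=
  (∀ e₁ e₂, G.EdgeAdj e₁ e₂ → f e₁ ≠ f e₂) ∧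
  (∀ v : V, ∃ u : V', f '' G.inc v = H.inc u)

end Multigraph

/-- The graph `G*`.  Vertices `0,…,8` induce the Petersen graph minus a vertex `v₀`
(vertices `0`, `3`, `4` are the former neighbours of `v₀`); vertex `9` is `u`;
vertices `10`, `11` are `s₁`, `s₂`; vertices `12,13,14` form the triangle `t₁t₂t₃`;
vertices `15,…,23` are the three attached copies of `S₄` (with `17`, `20`, `23`
the vertices `c` joined to `s₁`, `s₂`, `t₃` respectively).
Edges `0,…,11` form `E₁` (the copy of the Petersen graph minus a vertex),
edges `12,…,23` form `E₂`, and edges `24,…,35` are the edges of the copies of `S₄`. -/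
def Gstar : Multigraph (Fin 24) (Fin 36) where
  ends := ![s(0,1), s(1,2), s(2,3), s(0,5), s(1,6), s(2,7), s(3,8), s(4,6), s(4,7),
            s(5,7), s(5,8), s(6,8),
            s(9,10), s(9,11), s(9,12), s(12,13), s(13,14), s(12,14),
            s(10,0), s(11,3), s(13,4), s(10,17), s(11,20), s(14,23),
            s(15,16), s(15,16), s(15,17), s(16,17),
            s(18,19), s(18,19), s(18,20), s(19,20),
            s(21,22), s(21,22), s(21,23), s(22,23)]
  loopless := by decide

/-- `E₁`: the edges of the subgraph `H` of `G*` isomorphic to the Petersen graph minus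
a vertex. -/
def E1 : Set (Fin 36) := {e | e.val ≤ 11}

/-- `E₂`: the edges of `G*` belonging neither to `E₁` nor to a copy of `S₄`. -/
def E2 : Set (Fin 36) := {e | 12 ≤ e.val ∧ e.val ≤ 23}

namespace Multigraph

variable {V E : Type} [Fintype E] [DecidableEq V]

def degree (G : Multigraph V E) (v : V) : ℕ := (Finset.univ.filter fun e => v ∈ G.ends e).card

theorem ncard_inc (G : Multigraph V E) (v : V) : (G.inc v).ncard = G.degree v := by
  rw [degree, ← Set.ncard_coe_finset]
  congr 1
  ext e
  simp [inc]

instance [Fintype V] [DecidableEq E] (G : Multigraph V E) : DecidableRel G.EdgeAdj :=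
  fun e₁ e₂ => inferInstanceAs (Decidable (e₁ ≠ e₂ ∧ ∃ v, v ∈ G.ends e₁ ∧ v ∈ G.ends e₂))

end Multigraph

/-- Each `c`-vertex is matched to its attachment vertex (`s₁`, `s₂`, `t₃`) and `a, b` of each
copy of `S₄` by one of their parallel edges; `u t₁` and `t₂ 4` are matched, and the edges
`0 1`, `2 3`, `5 7`, `6 8` match the rest of the Petersen graph minus `v₀`. -/
def gstarMatching : Finset (Fin 36) := {0, 2, 9, 11, 14, 20, 21, 22, 23, 24, 28, 32}

theorem gstar_degree : ∀ v : Fin 24, Gstar.degree v = 3 := by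
  decide

theorem gstarMatching_pairwise_not_edgeAdj :
    ∀ e₁ ∈ gstarMatching, ∀ e₂ ∈ gstarMatching, ¬ Gstar.EdgeAdj e₁ e₂ := by
  decide +kernel

theorem gstarMatching_covers : ∀ v : Fin 24, ∃ e ∈ gstarMatching, v ∈ Gstar.ends e := by
  decide

/-- The graph `G*` is a cubic (3-regular) loopless graph (looplessness is built into
the `Multigraph` structure) that admits a perfect matching: a set `M` of pairwise
nonadjacent edges such that every vertex is incident with an edge of `M`. -/
theorem gstar_cubic_and_has_perfect_matching :
    (∀ v : Fin 24, (Gstar.inc v).ncard = 3) ∧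
    (∃ M : Set (Fin 36), (∀ e₁ ∈ M, ∀ e₂ ∈ M, ¬ Gstar.EdgeAdj e₁ e₂) ∧
      ∀ v : Fin 24, ∃ e ∈ M, e ∈ Gstar.inc v) :=
  ⟨fun v => (Gstar.ncard_inc v).trans (gstar_degree v),
    ⟨gstarMatching, gstarMatching_pairwise_not_edgeAdj, gstarMatching_covers⟩⟩
end

section
/- S10 colors S12; that is, there exists an S10-coloring of S12. -/
/-- The Sylvester graph `S₁₀`: vertex `0` is the centre `w`; vertices `1,2,3` are
`z₁,z₂,z₃`; vertices `4,5` are `x₁,y₁`; vertices `6,7` are `x₂,y₂`; vertices `8,9` are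
`x₃,y₃`.  Edges `9,…,14` are the three pairs of parallel edges. -/
def S10 : Multigraph (Fin 10) (Fin 15) where
  ends := ![s(0,1), s(0,2), s(0,3), s(1,4), s(1,5), s(2,6), s(2,7), s(3,8), s(3,9),
            s(4,5), s(4,5), s(6,7), s(6,7), s(8,9), s(8,9)]
  loopless := by decide

/-- `A₁` is the set of the six edges of `S₁₀` lying in a pair of parallel edges. -/
def A1 : Set (Fin 15) := {9, 10, 11, 12, 13, 14}

/-- The graph `S₁₂`, obtained from `S₁₀` by replacing the central vertex by a triangle:
vertices `0,1,2` form the triangle (edges `0,1,2`); vertices `3,4,5` are `z₁,z₂,z₃`,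
joined to the triangle by edges `3,4,5`; vertices `6,7`, `8,9`, `10,11` are
`x₁,y₁`, `x₂,y₂`, `x₃,y₃`; edges `12,…,17` are the three pairs of parallel edges. -/
def S12 : Multigraph (Fin 12) (Fin 18) where
  ends := ![s(0,1), s(1,2), s(0,2), s(0,3), s(1,4), s(2,5),
            s(3,6), s(3,7), s(4,8), s(4,9), s(5,10), s(5,11),
            s(6,7), s(6,7), s(8,9), s(8,9), s(10,11), s(10,11)]
  loopless := by decide

namespace Multigraph

variable {V E V' E' : Type}

theorem isColoring_iff (G : Multigraph V E) (H : Multigraph V' E') (f : E → E') :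
    G.IsColoring H f ↔
      (∀ e₁ e₂, e₁ ≠ e₂ → (∃ v, v ∈ G.ends e₁ ∧ v ∈ G.ends e₂) → f e₁ ≠ f e₂) ∧
      ∀ v, ∃ u, ∀ e', (∃ e, v ∈ G.ends e ∧ f e = e') ↔ u ∈ H.ends e' := by
  simp only [IsColoring, EdgeAdj, inc, Set.ext_iff, Set.mem_image, Set.mem_ofPred_eq, and_imp]

instance decidableIsColoring [Fintype V] [DecidableEq V] [Fintype E] [DecidableEq E]
    [Fintype V'] [DecidableEq V'] [Fintype E'] [DecidableEq E'] (G : Multigraph V E) (H : Multigraph V' E') (f : E → E') :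
    Decidable (G.IsColoring H f) :=
  decidable_of_iff _ (isColoring_iff G H f).symm

end Multigraph

/-- Every triangle vertex of `S₁₂` goes to the centre `w` of `S₁₀`: the triangle edges `01, 12, 02`
go to `wz₁, wz₂, wz₃`, so the edge from the triangle to `zᵢ` takes the one remaining edge at `w`,
namely `wzᵢ₊₁` (indices mod 3), and the branch at `zᵢ` is carried onto the branch at `zᵢ₊₁`. -/
def triangleCollapse : Fin 18 → Fin 15 :=
  ![0, 1, 2, 1, 2, 0, 5, 6, 7, 8, 3, 4, 11, 12, 13, 14, 9, 10]

/-- `S₁₀` colors `S₁₂`: there exists an `S₁₀`-coloring of `S₁₂`. -/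
theorem S10_colors_S12 : ∃ f : Fin 18 → Fin 15, S12.IsColoring S10 f :=
  ⟨triangleCollapse, by decide⟩
end

section
/- Let f : E(G) → E(H) be an H-coloring of G. If e is a bridge of G, then f(e) is a bridge of H. -/
/-- `G.Reach F a b` holds if the vertices `a` and `b` are joined by a walk all of whose
edges lie in the edge set `F`. -/
def Multigraph.Reach {V E : Type} (G : Multigraph V E) (F : Set E) (a b : V) : Prop :=
  Relation.ReflTransGen (fun x y => ∃ e ∈ F, G.ends e = s(x, y)) a b

/-- An edge `e` of `G` is a bridge if its (distinct) endpoints are not joined by any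
walk avoiding `e`; equivalently, removing `e` increases the number of components. -/
def Multigraph.IsBridge {V E : Type} (G : Multigraph V E) (e : E) : Prop :=
  ∀ a b : V, a ∈ G.ends e → b ∈ G.ends e → a ≠ b → ¬ G.Reach {e' | e' ≠ e} a b

/-! Work in the cycle space over `𝔽₂`, the kernel of the vertex-edge incidence matrix. An edge `e`
is a bridge iff every cycle vector vanishes on `e`: a walk between the ends of `e` avoiding `e`,
together with `e`, is a cycle vector, and conversely summing the parity conditions over the vertices
reachable from one end of `e` in `G - e` (a cut whose only edge is `e`) shows that any cycle vector
vanishes on `e`. Since an `H`-coloring maps each `∂_G(v)` bijectively onto some `∂_H(u)`, composing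
with it pulls cycle vectors of `H` back to cycle vectors of `G`. -/

open Matrix

namespace Multigraph

variable {V E V' E' : Type}

theorem ne_of_ends_eq (G : Multigraph V E) {e : E} {x y : V} (h : G.ends e = s(x, y)) : x ≠ y :=
  fun hxy => G.loopless e (by rw [h, Sym2.mk_isDiag_iff]; exact hxy)

theorem exists_ends_eq (G : Multigraph V E) (e : E) : ∃ x y, G.ends e = s(x, y) := by
  induction G.ends e using Sym2.ind with
  | h x y => exact ⟨x, y, rfl⟩

section IncMatrix

variable [DecidableEq V]

def incMatrix (G : Multigraph V E) : Matrix V E (ZMod 2) :=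
  Matrix.of fun v e => if v ∈ G.ends e then 1 else 0

theorem incMatrix_col (G : Multigraph V E) {e : E} {x y : V} (h : G.ends e = s(x, y)) :
    G.incMatrix.col e = Pi.single x 1 + Pi.single y 1 := by
  have hxy := G.ne_of_ends_eq h
  ext v
  by_cases hx : v = x <;> by_cases hy : v = y <;> simp_all [incMatrix]

variable [Fintype E]

theorem incMatrix_mulVec_apply (G : Multigraph V E) (g : E → ZMod 2) (v : V) :
    (G.incMatrix *ᵥ g) v = ∑ e with v ∈ G.ends e, g e := by
  simp [Matrix.mulVec, dotProduct, incMatrix, Finset.sum_filter]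

def cycleSpace (G : Multigraph V E) : Submodule (ZMod 2) (E → ZMod 2) :=
  LinearMap.ker G.incMatrix.mulVecLin

theorem mem_cycleSpace {G : Multigraph V E} {g : E → ZMod 2} :
    g ∈ G.cycleSpace ↔ G.incMatrix *ᵥ g = 0 :=
  LinearMap.mem_ker

theorem IsColoring.comp_mem_cycleSpace [DecidableEq V'] [Fintype E'] {G : Multigraph V E}
    {H : Multigraph V' E'} {f : E → E'} (hf : G.IsColoring H f) {g : E' → ZMod 2}
    (hg : g ∈ H.cycleSpace) : g ∘ f ∈ G.cycleSpace := by
  classical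
  refine mem_cycleSpace.2 (funext fun v => ?_)
  obtain ⟨u, hu⟩ := hf.2 v
  have hinj : Set.InjOn f {e | v ∈ G.ends e} := fun e₁ h₁ e₂ h₂ h =>
    by_contra fun hne => hf.1 e₁ e₂ ⟨hne, v, h₁, h₂⟩ h
  have himage : (Finset.univ.filter fun e => v ∈ G.ends e).image f =
      Finset.univ.filter fun e' => u ∈ H.ends e' := by
    apply Finset.coe_injective
    simpa [inc] using hu
  calc (G.incMatrix *ᵥ (g ∘ f)) v = ∑ e with v ∈ G.ends e, g (f e) := incMatrix_mulVec_apply ..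
    _ = ∑ e' with u ∈ H.ends e', g e' := by rw [← himage, Finset.sum_image (by simpa using hinj)]
    _ = (H.incMatrix *ᵥ g) u := (incMatrix_mulVec_apply ..).symm
    _ = 0 := congrFun (mem_cycleSpace.1 hg) u

variable [DecidableEq E]

theorem Reach.exists_incMatrix_mulVec_eq {G : Multigraph V E} {F : Set E} {a b : V}
    (h : G.Reach F a b) :
    ∃ g : E → ZMod 2, (∀ e ∉ F, g e = 0) ∧ G.incMatrix *ᵥ g = Pi.single a 1 + Pi.single b 1 := by
  have : Nonempty V := ⟨a⟩ -- for the instance `CharP (V → ZMod 2) 2`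
  induction h with
  | refl => exact ⟨0, fun _ _ => rfl, by rw [mulVec_zero, CharTwo.add_self_eq_zero]⟩
  | @tail x y _ hxy ih =>
    obtain ⟨g, hgF, hg⟩ := ih
    obtain ⟨e, heF, he⟩ := hxy
    refine ⟨g + Pi.single e 1, fun e' he' => ?_, ?_⟩
    · rw [Pi.add_apply, hgF e' he', Pi.single_eq_of_ne (ne_of_mem_of_not_mem heF he').symm,
        add_zero]
    · rw [mulVec_add, hg, mulVec_single_one, G.incMatrix_col he, add_assoc,
        CharTwo.add_cancel_left]

theorem isBridge_of_forall_mem_cycleSpace {G : Multigraph V E} {e : E}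
    (h : ∀ g ∈ G.cycleSpace, g e = 0) : G.IsBridge e := by
  intro a b ha hb hab hreach
  have : Nonempty V := ⟨a⟩
  have hends : G.ends e = s(a, b) := (Sym2.mem_and_mem_iff hab).1 ⟨ha, hb⟩
  obtain ⟨g, hgF, hg⟩ := hreach.exists_incMatrix_mulVec_eq
  have hcycle : g + Pi.single e 1 ∈ G.cycleSpace := by
    rw [mem_cycleSpace, mulVec_add, hg, mulVec_single_one, G.incMatrix_col hends,
      CharTwo.add_self_eq_zero]
  have := h _ hcycle
  rw [Pi.add_apply, hgF e (fun h => h rfl), Pi.single_eq_same, zero_add] at this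
  exact one_ne_zero this

theorem IsBridge.apply_eq_zero_of_mem_cycleSpace [Fintype V] {G : Multigraph V E} {e : E}
    (he : G.IsBridge e) {g : E → ZMod 2} (hg : g ∈ G.cycleSpace) : g e = 0 := by
  classical
  obtain ⟨x, y, hxy⟩ := G.exists_ends_eq e
  -- the indicator vector of the component of `x` in `G - e`, whose only boundary edge is `e`
  set w : V → ZMod 2 := fun v => if G.Reach {e' | e' ≠ e} x v then 1 else 0
  have hwx : w x = 1 := if_pos Relation.ReflTransGen.refl
  have hwy : w y = 0 :=
    if_neg (he x y (by simp [hxy]) (by simp [hxy]) (G.ne_of_ends_eq hxy))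
  have hcut : w ᵥ* G.incMatrix = Pi.single e 1 := by
    funext e'
    obtain ⟨p, q, hpq⟩ := G.exists_ends_eq e'
    change w ⬝ᵥ G.incMatrix.col e' = _
    rw [G.incMatrix_col hpq, dotProduct_add, dotProduct_single_one,
      dotProduct_single_one]
    by_cases he' : e' = e
    · subst he'
      obtain ⟨rfl, rfl⟩ | ⟨rfl, rfl⟩ := Sym2.eq_iff.1 (hxy.symm.trans hpq) <;>
        simp [hwx, hwy]
    · have hpq' : G.ends e' = s(q, p) := hpq.trans Sym2.eq_swap
      have : G.Reach {e' | e' ≠ e} x p ↔ G.Reach {e' | e' ≠ e} x q :=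
        ⟨fun h => h.tail ⟨e', he', hpq⟩, fun h => h.tail ⟨e', he', hpq'⟩⟩
      simp [w, this, Pi.single_eq_of_ne he', CharTwo.add_self_eq_zero]
  calc g e = w ⬝ᵥ (G.incMatrix *ᵥ g) := by rw [dotProduct_mulVec, hcut, single_one_dotProduct]
    _ = 0 := by rw [mem_cycleSpace.1 hg, dotProduct_zero]

end IncMatrix

end Multigraph

theorem coloring_maps_bridges_to_bridges_general {V E V' E' : Type}
    [Fintype V] [Fintype E] [Fintype E']
    (G : Multigraph V E) (H : Multigraph V' E') (f : E → E')
    (hf : G.IsColoring H f) (e : E) (he : G.IsBridge e) :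
    H.IsBridge (f e) := by
  classical
  exact Multigraph.isBridge_of_forall_mem_cycleSpace fun g hg =>
    he.apply_eq_zero_of_mem_cycleSpace (hf.comp_mem_cycleSpace hg)

/-- If `f` is an `H`-coloring of `G` and `e` is a bridge of `G`, then `f(e)` is a
bridge of `H`. -/
theorem coloring_maps_bridges_to_bridges {V E V' E' : Type}
    [Fintype V] [Fintype E] [Fintype V'] [Fintype E']
    (G : Multigraph V E) (H : Multigraph V' E') (f : E → E')
    (hf : G.IsColoring H f) (e : E) (he : G.IsBridge e) :
    H.IsBridge (f e) :=
  coloring_maps_bridges_to_bridges_general G H f hf e he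
end

section
/- Let f : E(G) → E(S10) be an S10-coloring of a graph G. Then the subgraph of G induced by f^{-1}(A1) is a disjoint union of circuits of even length, where A1 is the set of the six edges of S10 that lie in a pair of parallel edges. -/
namespace Multigraph

variable {V E V' E' : Type}

def simpleGraphOn (G : Multigraph V E) (F : Set E) : SimpleGraph V where
  Adj x y := ∃ e ∈ F, G.ends e = s(x, y)
  symm := ⟨fun _ _ ⟨e, he, h⟩ => ⟨e, he, h.trans Sym2.eq_swap⟩⟩
  loopless := ⟨fun _ ⟨e, _, h⟩ => G.loopless e (h ▸ Sym2.mk_isDiag_iff.2 rfl)⟩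

variable {G : Multigraph V E} {H : Multigraph V' E'} {f : E → E'}

lemma mem_inc_left {e : E} {x y : V} (h : G.ends e = s(x, y)) : e ∈ G.inc x :=
  show x ∈ G.ends e from h ▸ Sym2.mem_mk_left x y

lemma mem_inc_right {e : E} {x y : V} (h : G.ends e = s(x, y)) : e ∈ G.inc y :=
  show y ∈ G.ends e from h ▸ Sym2.mem_mk_right x y

namespace IsColoring

lemma injOn_inc (hf : G.IsColoring H f) (v : V) : Set.InjOn f (G.inc v) :=
  fun e he e' he' hfe => by_contra fun hne => hf.1 e e' ⟨hne, v, he, he'⟩ hfe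

lemma existsUnique_adj_simpleGraphOn (hf : G.IsColoring H f) {v : V} {c : E'}
    (hc : c ∈ f '' G.inc v) : ∃! w, (G.simpleGraphOn (f ⁻¹' {c})).Adj v w := by
  obtain ⟨e, he, rfl⟩ := hc
  refine ⟨Sym2.Mem.other he, ⟨e, rfl, (Sym2.other_spec he).symm⟩, ?_⟩
  rintro w ⟨e', he'c, hends⟩
  obtain rfl : e' = e := hf.injOn_inc v (mem_inc_left hends) he he'c
  rwa [← Sym2.other_spec he, Sym2.congr_right, eq_comm] at hends

lemma inter_image_inc_eq_of_reach (hf : G.IsColoring H f) {A : Set E'}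
    (hA : ∀ u u' x, x ∈ A → x ∈ H.inc u → x ∈ H.inc u' → A ∩ H.inc u = A ∩ H.inc u')
    {v w : V} (h : G.Reach (f ⁻¹' A) v w) : A ∩ f '' G.inc v = A ∩ f '' G.inc w := by
  induction h with
  | refl => rfl
  | @tail x y _ hxy ih =>
    obtain ⟨e, he, hends⟩ := hxy
    obtain ⟨u, hu⟩ := hf.2 x
    obtain ⟨u', hu'⟩ := hf.2 y
    rw [ih, hu, hu']
    exact hA u u' (f e) he (hu ▸ Set.mem_image_of_mem f (mem_inc_left hends))
      (hu' ▸ Set.mem_image_of_mem f (mem_inc_right hends))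

end IsColoring

end Multigraph

theorem SimpleGraph.even_ncard_of_existsUnique_adj {V : Type} (H : SimpleGraph V) {S : Set V}
    (hS : S.Finite) (hclosed : ∀ v w, v ∈ S → H.Adj v w → w ∈ S)
    (hunique : ∀ v ∈ S, ∃! w, H.Adj v w) : Even S.ncard := by
  have hM : ((⊤ : H.Subgraph).induce S).IsMatching := by
    intro v hv
    obtain ⟨w, hvw, hw⟩ := hunique v hv
    exact ⟨w, ⟨hv, hclosed v w hv hvw, hvw⟩, fun w' hw' => hw w' hw'.2.2⟩
  have : Fintype ((⊤ : H.Subgraph).induce S).verts := hS.fintype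
  rw [Set.ncard_eq_toFinset_card S hS]
  convert hM.even_card
  ext
  simp

instance : DecidablePred (· ∈ A1) := fun x => by unfold A1; infer_instance

lemma S10_A1_inter_inc_eq (u u' : Fin 10) (x : Fin 15) (hx : x ∈ A1) (hu : x ∈ S10.inc u)
    (hu' : x ∈ S10.inc u') : A1 ∩ S10.inc u = A1 ∩ S10.inc u' := by
  ext y
  simp only [Set.mem_inter_iff, Multigraph.inc, Set.mem_ofPred_eq] at *
  revert u u' x y
  decide

lemma S10_ncard_A1_inter_inc (u : Fin 10) (h : (A1 ∩ S10.inc u).Nonempty) :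
    (A1 ∩ S10.inc u).ncard = 2 := by
  have hfin : A1 ∩ S10.inc u = ↑(Finset.univ.filter fun y => y ∈ A1 ∧ u ∈ S10.ends y) := by
    ext; simp [Multigraph.inc]
  rw [hfin, Finset.coe_nonempty] at h
  rw [hfin, Set.ncard_coe_finset]
  clear hfin
  revert u h
  decide

theorem preimage_A1_is_disjoint_union_of_even_circuits_general {V E : Type}
    [Fintype V]
    (G : Multigraph V E) (f : E → Fin 15) (hf : G.IsColoring S10 f) :
    (∀ v : V, ((f ⁻¹' A1) ∩ G.inc v).Nonempty → ((f ⁻¹' A1) ∩ G.inc v).ncard = 2) ∧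
    (∀ v : V, ((f ⁻¹' A1) ∩ G.inc v).Nonempty →
      Even {w : V | G.Reach (f ⁻¹' A1) v w}.ncard) := by
  constructor
  · intro v hv
    obtain ⟨u, hu⟩ := hf.2 v
    have himage : f '' (f ⁻¹' A1 ∩ G.inc v) = A1 ∩ S10.inc u :=
      hu ▸ Set.image_preimage_inter f _ A1
    rw [← ((hf.injOn_inc v).mono Set.inter_subset_right).ncard_image, himage]
    exact S10_ncard_A1_inter_inc u (himage ▸ hv.image f)
  · rintro v ⟨e, heA, hev⟩
    refine (G.simpleGraphOn (f ⁻¹' {f e})).even_ncard_of_existsUnique_adj (Set.toFinite _)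
      ?_ fun w hw => hf.existsUnique_adj_simpleGraphOn ?_
    · rintro w y hw ⟨e', he'c, hends⟩
      exact hw.tail ⟨e', show f e' ∈ A1 from (he'c : f e' = f e) ▸ heA, hends⟩
    · have hcolors := hf.inter_image_inc_eq_of_reach S10_A1_inter_inc_eq hw
      exact (hcolors ▸ ⟨heA, Set.mem_image_of_mem f hev⟩ : f e ∈ A1 ∩ f '' G.inc w).2

/-- If `f` is an `S₁₀`-coloring of a graph `G`, then the subgraph of `G` induced by
`f⁻¹(A₁)` is a disjoint union of circuits of even length: every vertex incident with an
edge of `f⁻¹(A₁)` is incident with exactly two of them (so the induced subgraph is a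
disjoint union of circuits), and the connected component of each such vertex within
`f⁻¹(A₁)` has an even number of vertices. -/
theorem preimage_A1_is_disjoint_union_of_even_circuits {V E : Type}
    [Fintype V] [Fintype E]
    (G : Multigraph V E) (f : E → Fin 15) (hf : G.IsColoring S10 f) :
    (∀ v : V, ((f ⁻¹' A1) ∩ G.inc v).Nonempty → ((f ⁻¹' A1) ∩ G.inc v).ncard = 2) ∧
    (∀ v : V, ((f ⁻¹' A1) ∩ G.inc v).Nonempty →
      Even {w : V | G.Reach (f ⁻¹' A1) v w}.ncard) :=
  preimage_A1_is_disjoint_union_of_even_circuits_general G f hf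
end
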